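/- arXiv:1106.3442 — 2 statements merged into one kernel-verified Lean document; each statement's English description precedes it below -/
import Mathlib

section
/- Let G be a group, C a subgroup of G contained in the center Z(G), and H a perfect subgroup of G such that every element of G can be written as a product c·h with c ∈ C and h ∈ H. Then H equals the commutator subgroup ⁅G,G⁆ of G. -/
/-!
Central factors do not change commutators, so `G = C·H` with `C` central gives
`⁅G, G⁆ = ⁅H, H⁆`, and `⁅H, H⁆ = H` because `H` is perfect.
-/

open scoped commutatorElement

open Subgroup

section CentralFactor

variable {G : Type*} [Group G] {c : G}

theorem commutatorElement_central_mul_left (hc : c ∈ center G) (g k : G) :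
    ⁅c * g, k⁆ = ⁅g, k⁆ := by
  have hck : ⁅c, k⁆ = 1 :=
    commutatorElement_eq_one_iff_mul_comm.mpr (mem_center_iff.mp hc k).symm
  rw [commutatorElement_mul_left_eq_conj_mul, hck, mul_one, ← mem_center_iff.mp hc ⁅g, k⁆,
    mul_inv_cancel_right]

theorem commutatorElement_central_mul_right (hc : c ∈ center G) (g k : G) :
    ⁅g, c * k⁆ = ⁅g, k⁆ := by
  rw [← commutatorElement_inv, commutatorElement_central_mul_left hc, commutatorElement_inv]

end CentralFactor

theorem commutator_eq_commutator_of_forall_eq_central_mul {G : Type*} [Group G] {H : Subgroup G}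
    (hG : ∀ g : G, ∃ c ∈ center G, ∃ h ∈ H, g = c * h) :
    commutator G = ⁅H, H⁆ := by
  refine le_antisymm (commutator_le.mpr ?_) (commutator_mono le_top le_top)
  intro g₁ _ g₂ _
  obtain ⟨c₁, hc₁, h₁, hh₁, rfl⟩ := hG g₁
  obtain ⟨c₂, hc₂, h₂, hh₂, rfl⟩ := hG g₂
  rw [commutatorElement_central_mul_left hc₁, commutatorElement_central_mul_right hc₂]
  exact commutator_mem_commutator hh₁ hh₂

/-- If `C` is a central subgroup of `G` and `H` is a perfect subgroup such that every
element of `G` is a product `c * h` with `c ∈ C`, `h ∈ H`, then `H` equals the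
commutator subgroup of `G`. -/
theorem perfect_central_complement_eq_commutator
    {G : Type*} [Group G] (C H : Subgroup G)
    (hC : C ≤ Subgroup.center G)
    (hH : commutator ↥H = ⊤)
    (hprod : ∀ g : G, ∃ c ∈ C, ∃ h ∈ H, g = c * h) :
    H = commutator G := by
  have hG : ∀ g : G, ∃ c ∈ center G, ∃ h ∈ H, g = c * h := fun g ↦
    let ⟨c, hc, h, hh, hg⟩ := hprod g
    ⟨c, hC hc, h, hh, hg⟩
  calc H = (commutator H).map H.subtype := by rw [hH, ← MonoidHom.range_eq_map, H.range_subtype]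
    _ = ⁅H, H⁆ := H.map_subtype_commutator
    _ = commutator G := (commutator_eq_commutator_of_forall_eq_central_mul hG).symm
end

section
/- Let f : G → Q be a surjective group homomorphism and n ≥ 1 a natural number such that every element of Q is a product of at most n commutators of elements of Q. Then every element g of G can be written as g = z·x, where z ∈ ker f and x ∈ G is a product of at most n commutators of elements of G; moreover, if g lies in the commutator subgroup ⁅G,G⁆, then z can be chosen in ker f ∩ ⁅G,G⁆. -/
/-!
Lifting each commutator factor of `f g` through `f` gives a product `x` of at most `n`
commutators of `G` with `f x = f g`, so `z = g * x⁻¹` lies in `ker f`; since `x ∈ ⁅G,G⁆`,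
so does `z` whenever `g` does.
-/

open scoped commutatorElement

def commutatorProds (G : Type*) [Group G] (n : ℕ) : Set G :=
  {x | ∃ l : List (G × G), l.length ≤ n ∧ x = (l.map fun p => ⁅p.1, p.2⁆).prod}

section commutatorProds

variable {G Q : Type*} [Group G] [Group Q]

theorem commutatorProds_subset_commutator (n : ℕ) : commutatorProds G n ⊆ commutator G := by
  rintro _ ⟨l, -, rfl⟩
  refine Subgroup.list_prod_mem _ fun x hx => ?_
  obtain ⟨p, -, rfl⟩ := List.mem_map.mp hx
  exact Subgroup.commutator_mem_commutator (Subgroup.mem_top _) (Subgroup.mem_top _)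

theorem MonoidHom.map_list_prod_commutatorElement (f : G →* Q) (l : List (G × G)) :
    f (l.map fun p => ⁅p.1, p.2⁆).prod =
      ((l.map (Prod.map f f)).map fun p => ⁅p.1, p.2⁆).prod := by
  simp only [map_list_prod, List.map_map]
  exact congrArg List.prod (List.map_congr_left fun p _ => map_commutatorElement f p.1 p.2)

theorem MonoidHom.image_commutatorProds_of_surjective (f : G →* Q)
    (hf : Function.Surjective f) (n : ℕ) :
    f '' commutatorProds G n = commutatorProds Q n := by
  apply subset_antisymm
  · rintro _ ⟨_, ⟨l, hl, rfl⟩, rfl⟩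
    exact ⟨l.map (Prod.map f f), by rwa [List.length_map], f.map_list_prod_commutatorElement l⟩
  · rintro _ ⟨l, hl, rfl⟩
    obtain ⟨l', rfl⟩ := List.map_surjective_iff.mpr (hf.prodMap hf) l
    exact ⟨_, ⟨l', by rwa [List.length_map] at hl, rfl⟩, f.map_list_prod_commutatorElement l'⟩

end commutatorProds

theorem exists_ker_mul_commutatorProds_of_surjective_general
    {G Q : Type*} [Group G] [Group Q] (f : G →* Q) (n : ℕ)
    (hf : Function.Surjective f)
    (hQ : ∀ q : Q, q ∈ commutatorProds Q n) :
    (∀ g : G, ∃ z ∈ f.ker, ∃ x ∈ commutatorProds G n, g = z * x) ∧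
      (∀ g ∈ commutator G, ∃ z ∈ f.ker ⊓ commutator G,
        ∃ x ∈ commutatorProds G n, g = z * x) := by
  have lift (g : G) : ∃ x ∈ commutatorProds G n, g * x⁻¹ ∈ f.ker := by
    rw [← f.image_commutatorProds_of_surjective hf n] at hQ
    obtain ⟨x, hx, hfx⟩ := hQ (f g)
    exact ⟨x, hx, by rw [f.mem_ker, map_mul, map_inv, hfx, mul_inv_cancel]⟩
  refine ⟨fun g => ?_, fun g hg => ?_⟩ <;> obtain ⟨x, hx, hker⟩ := lift g
  · exact ⟨g * x⁻¹, hker, x, hx, (inv_mul_cancel_right g x).symm⟩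
  · have hxG := commutatorProds_subset_commutator n hx
    exact ⟨g * x⁻¹, Subgroup.mem_inf.mpr ⟨hker, mul_mem hg (inv_mem hxG)⟩, x, hx,
      (inv_mul_cancel_right g x).symm⟩

/-- If `f : G → Q` is a surjective homomorphism and every element of `Q` is a product
of at most `n` commutators, then every `g ∈ G` can be written as `g = z * x` with
`z ∈ ker f` and `x` a product of at most `n` commutators of `G`; moreover if
`g ∈ ⁅G,G⁆` then `z` can be chosen in `ker f ∩ ⁅G,G⁆`. -/
theorem exists_ker_mul_commutatorProds_of_surjective
    {G Q : Type*} [Group G] [Group Q] (f : G →* Q) (n : ℕ)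
    (hf : Function.Surjective f) (hn : 1 ≤ n)
    (hQ : ∀ q : Q, q ∈ commutatorProds Q n) :
    (∀ g : G, ∃ z ∈ f.ker, ∃ x ∈ commutatorProds G n, g = z * x) ∧
      (∀ g ∈ commutator G, ∃ z ∈ f.ker ⊓ commutator G,
        ∃ x ∈ commutatorProds G n, g = z * x) :=
  exists_ker_mul_commutatorProds_of_surjective_general f n hf hQ
end
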